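/- For every integer k ≥ 3, every finite K_k-minor-free simple graph G admits a linear order on its vertices such that the resulting ordered graph belongs to T_{k−2}^{(k−2)}. -/

import Mathlib

/-- A layering of a simple graph: adjacent vertices differ by at most 1. -/
def IsLayering {V : Type*} (G : SimpleGraph V) (lam : V → ℤ) : Prop :=
  ∀ ⦃u v : V⦄, G.Adj u v → |lam u - lam v| ≤ 1

/-- The spanning subgraph of `G` keeping only the edges with both ends in `U`.
Reachability and distances between vertices of `U` in this graph coincide with those
in the induced subgraph `G[U]`. -/
def restrictSet {V : Type*} (G : SimpleGraph V) (U : Set V) : SimpleGraph V where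
  Adj u v := G.Adj u v ∧ u ∈ U ∧ v ∈ U
  symm := ⟨fun _ _ ⟨h, hu, hv⟩ => ⟨h.symm, hv, hu⟩⟩
  loopless := ⟨fun u ⟨h, _, _⟩ => G.ne_of_adj h rfl⟩

/-- An ordered graph: a finite simple graph with a linear order on its vertices. -/
structure OrderedGraph : Type 1 where
  V : Type
  [fin : Fintype V]
  [ord : LinearOrder V]
  graph : SimpleGraph V

attribute [instance] OrderedGraph.fin OrderedGraph.ord

/-- A graph with an ordered vertex set is chordal (as an ordered graph) if for every
vertex `v` the neighbors of `v` smaller than `v` induce a clique. -/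
def ChordalOrdered {V : Type*} [LinearOrder V] (G : SimpleGraph V) : Prop :=
  ∀ ⦃v u w : V⦄, G.Adj v u → G.Adj v w → u < v → w < v → u ≠ w → G.Adj u w

/-- The class `T_d` of chordal ordered graphs with all left-degrees at most `d`. -/
def Tclass (d : ℕ) : Set OrderedGraph :=
  {O | ChordalOrdered O.graph ∧ ∀ v : O.V, ({u | O.graph.Adj v u ∧ u < v}).ncard ≤ d}

/-- The quotient graph `G/𝒫` of an ordered graph by a partition `P : Fin m → Set O.V`:
vertex `i` is adjacent to vertex `j` iff `i ≠ j` and some `u ∈ P i`, `v ∈ P j` are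
adjacent in `G`. -/
def quotGraph (O : OrderedGraph) (m : ℕ) (P : Fin m → Set O.V) : SimpleGraph (Fin m) where
  Adj i j := i ≠ j ∧ ∃ u ∈ P i, ∃ v ∈ P j, O.graph.Adj u v
  symm := ⟨by
    rintro i j ⟨hij, u, hu, v, hv, huv⟩
    exact ⟨hij.symm, v, hv, u, hu, huv.symm⟩⟩
  loopless := ⟨by rintro i ⟨hii, -⟩; exact hii rfl⟩

/-- The quotient ordered graph `G/𝒫`, on `Fin m` with its natural order. -/
def OrderedGraph.quot (O : OrderedGraph) (m : ℕ) (P : Fin m → Set O.V) : OrderedGraph where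
  V := Fin m
  graph := quotGraph O m P

/-- The class `C^(d)`: ordered graphs admitting a width-`d` geodesic partition
`P₁, …, P_m` (each `G[P i]` has a layering which is geodesic with respect to
`G[P i ∪ ⋯ ∪ P m]` and has width at most `d`) whose quotient belongs to `C`. -/
def Cpow (C : Set OrderedGraph) (d : ℕ) : Set OrderedGraph :=
  {O | ∃ (m : ℕ) (P : Fin m → Set O.V),
    (∀ i, (P i).Nonempty) ∧
    (∀ i j, i ≠ j → Disjoint (P i) (P j)) ∧
    (⋃ i, P i) = Set.univ ∧
    (∀ i j : Fin m, i < j → ∀ u ∈ P i, ∀ v ∈ P j, u < v) ∧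
    (∀ i : Fin m, ∃ lam : O.V → ℤ,
      (∀ x ∈ P i, ∀ y ∈ P i, O.graph.Adj x y → |lam x - lam y| ≤ 1) ∧
      (∀ x ∈ P i, ∀ y ∈ P i,
        (restrictSet O.graph (⋃ j ∈ Set.Ici i, P j)).Reachable x y →
          |lam x - lam y| ≤ ((restrictSet O.graph (⋃ j ∈ Set.Ici i, P j)).dist x y : ℤ)) ∧
      (∀ z : ℤ, ({v | v ∈ P i ∧ lam v = z}).ncard ≤ d)) ∧
    O.quot m P ∈ C}

/-- `G` has a `K_k`-minor: there are pairwise disjoint nonempty vertex sets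
`B 0, …, B (k-1)`, each inducing a connected subgraph, pairwise joined by an edge. -/
def HasCliqueMinor {V : Type*} (G : SimpleGraph V) (k : ℕ) : Prop :=
  ∃ B : Fin k → Set V,
    (∀ i, (B i).Nonempty) ∧
    (∀ i j, i ≠ j → Disjoint (B i) (B j)) ∧
    (∀ i, ∀ x ∈ B i, ∀ y ∈ B i, (restrictSet G (B i)).Reachable x y) ∧
    (∀ i j, i ≠ j → ∃ u ∈ B i, ∃ v ∈ B j, G.Adj u v)


/-!
The partition is built greedily, one part at a time. Let `C` be a component of the vertices
not yet covered. The earlier parts touching `C` are pairwise adjacent (this is the invariant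
`BoundaryCliques`), so there are at most `k - 2` of them: with `C` they would otherwise form a
`K_k`-minor. The next part `P` is the union of geodesics of `C` from a root `c` to one neighbour
in `C` of each of these parts. It is connected, it touches all of them, and it meets each
distance level from `c` in at most one vertex per geodesic, so the distance from `c` in the
uncovered graph is a geodesic layering of `P` of width at most `k - 2`. A component of `C - P`
only touches `P` and parts touching `C`, which are again pairwise adjacent. Ordering the vertices
part by part, the left neighbours of `P` in the quotient are among the parts touching `C`, so the
quotient is chordal with left-degrees at most `k - 2`.
-/

open SimpleGraph Function

section restrictSet

variable {V : Type*} {G H : SimpleGraph V} {S S' T : Set V} {x y : V}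

lemma restrictSet_mono (h : S ⊆ S') : restrictSet G S ≤ restrictSet G S' :=
  fun _ _ ⟨huv, hu, hv⟩ => ⟨huv, h hu, h hv⟩

lemma restrictSet_le : restrictSet G S ≤ G := fun _ _ h => h.1

lemma restrictSet_restrictSet_le : restrictSet (restrictSet G S) T ≤ restrictSet G T :=
  fun _ _ h => ⟨h.1.1, h.2⟩

lemma reachable_restrictSet_of_walk (hHG : H ≤ G) :
    ∀ {x y : V} (w : H.Walk x y), (∀ v ∈ w.support, v ∈ T) → (restrictSet G T).Reachable x y
  | _, _, .nil, _ => .rfl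
  | _, _, .cons h w, hT => by
    simp only [Walk.support_cons, List.mem_cons, forall_eq_or_imp] at hT
    have hstep : (restrictSet G T).Adj _ _ := ⟨hHG h, hT.1, hT.2 _ w.start_mem_support⟩
    exact hstep.reachable.trans (reachable_restrictSet_of_walk hHG w hT.2)

lemma mem_of_reachable_restrictSet (h : (restrictSet G S).Reachable x y) (hx : x ∈ S) :
    y ∈ S := by
  by_contra hy
  obtain ⟨w⟩ := h
  obtain ⟨e, -, -, he⟩ := w.exists_boundary_dart S hx hy
  exact he e.adj.2.2

end restrictSet

namespace IsLayering

variable {V : Type*} {G H : SimpleGraph V} {lam : V → ℤ} {x y : V}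

lemma mono (hl : IsLayering G lam) (hHG : H ≤ G) : IsLayering H lam :=
  fun _ _ huv => hl (hHG huv)

lemma abs_sub_le_length (hl : IsLayering H lam) :
    ∀ {x y : V} (w : H.Walk x y), |lam x - lam y| ≤ w.length
  | _, _, .nil => by simp
  | x, y, .cons (v := v) h w => by
    have := hl h
    have := hl.abs_sub_le_length w
    have := abs_sub_le (lam x) (lam v) (lam y)
    simp only [Walk.length_cons]
    push_cast
    omega

lemma abs_sub_le_dist (hl : IsLayering H lam) (h : H.Reachable x y) :
    |lam x - lam y| ≤ H.dist x y := by
  obtain ⟨w, hw⟩ := h.exists_walk_length_eq_dist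
  simpa [hw] using hl.abs_sub_le_length w

end IsLayering

namespace SimpleGraph

variable {V : Type*} {H : SimpleGraph V} {c v x : V}

lemma isLayering_dist (H : SimpleGraph V) (c : V) : IsLayering H fun v => (H.dist c v : ℤ) := by
  intro u v huv
  dsimp only
  rcases huv.diff_dist_adj (u := c) with h | h | h <;> rw [abs_le] <;> omega

lemma Walk.getVert_dist_of_mem_support {p : H.Walk c x} (hp : p.length = H.dist c x)
    (hv : v ∈ p.support) : p.getVert (H.dist c v) = v := by
  classical
  rw [← length_eq_dist_of_subwalk hp (p.isSubwalk_takeUntil hv), Walk.length_takeUntil]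
  exact p.getVert_support_idxOf hv

end SimpleGraph

namespace GeodesicPartition

variable {V : Type*} {G H : SimpleGraph V} {A A' B B' S S' : Set V} {c y : V}

def AdjSets (G : SimpleGraph V) (A B : Set V) : Prop := ∃ u ∈ A, ∃ v ∈ B, G.Adj u v

lemma AdjSets.symm (h : AdjSets G A B) : AdjSets G B A :=
  let ⟨u, hu, v, hv, huv⟩ := h; ⟨v, hv, u, hu, huv.symm⟩

lemma AdjSets.mono (h : AdjSets G A B) (hA : A ⊆ A') (hB : B ⊆ B') : AdjSets G A' B' :=
  let ⟨u, hu, v, hv, huv⟩ := h; ⟨u, hA hu, v, hB hv, huv⟩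

def IsPreconnectedOn (G : SimpleGraph V) (S : Set V) : Prop :=
  ∀ x ∈ S, ∀ y ∈ S, (restrictSet G S).Reachable x y

def componentIn (G : SimpleGraph V) (S : Set V) (c : V) : Set V :=
  {y | (restrictSet G S).Reachable c y}

lemma mem_componentIn_self : c ∈ componentIn G S c := .rfl

lemma componentIn_subset (hc : c ∈ S) : componentIn G S c ⊆ S :=
  fun _ hy => mem_of_reachable_restrictSet hy hc

lemma componentIn_mono (h : S ⊆ S') : componentIn G S c ⊆ componentIn G S' c :=
  fun _ hy => hy.mono (restrictSet_mono h)

lemma componentIn_subset_of_mem (hy : y ∈ componentIn G S c) :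
    componentIn G S y ⊆ componentIn G S c :=
  fun _ hz => Reachable.trans hy hz

lemma mem_componentIn_of_adj {u v : V} (hc : c ∈ S) (hu : u ∈ componentIn G S c) (hv : v ∈ S)
    (huv : G.Adj u v) : v ∈ componentIn G S c :=
  Reachable.trans hu (Adj.reachable ⟨huv, componentIn_subset hc hu, hv⟩)

lemma isPreconnectedOn_componentIn : IsPreconnectedOn G (componentIn G S c) := by
  classical
  have hbase : ∀ y ∈ componentIn G S c, (restrictSet G (componentIn G S c)).Reachable c y := by
    rintro y ⟨w⟩
    exact reachable_restrictSet_of_walk restrictSet_le w fun v hv => ⟨w.takeUntil v hv⟩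
  exact fun x hx y hy => (hbase x hx).symm.trans (hbase y hy)

lemma exists_geodesic_tree {ι : Type*} [Finite ι] (x : ι → V) (hx : ∀ i, H.Reachable c (x i)) :
    ∃ P : Set V, c ∈ P ∧ (∀ i, x i ∈ P) ∧ IsPreconnectedOn H P ∧
      ∀ z : ℤ, {v | v ∈ P ∧ (H.dist c v : ℤ) = z}.ncard ≤ max 1 (Nat.card ι) := by
  classical
  choose p hp using fun i => (hx i).exists_walk_length_eq_dist
  set P : Set V := insert c (⋃ i, {v | v ∈ (p i).support})
  have hmem : ∀ i, ∀ v ∈ (p i).support, v ∈ P :=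
    fun i v hv => Set.mem_insert_of_mem _ (Set.mem_iUnion.2 ⟨i, hv⟩)
  have hroot : ∀ v ∈ P, (restrictSet H P).Reachable c v := by
    rintro v (rfl | hv)
    · exact .rfl
    obtain ⟨i, hv⟩ := Set.mem_iUnion.1 hv
    exact reachable_restrictSet_of_walk le_rfl ((p i).takeUntil v hv)
      fun w hw => hmem i w ((p i).support_takeUntil_subset_support hv hw)
  refine ⟨P, Set.mem_insert _ _, fun i => hmem i _ (p i).end_mem_support,
    fun v hv w hw => (hroot v hv).symm.trans (hroot w hw), fun z => ?_⟩
  rcases eq_or_ne z 0 with rfl | hz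
  · have hsub : {v | v ∈ P ∧ (H.dist c v : ℤ) = 0} ⊆ {c} := by
      rintro v ⟨hv, hdist⟩
      have hreach := (hroot v hv).mono restrictSet_le
      exact ((hreach.dist_eq_zero_iff.1 (by exact_mod_cast hdist)).symm : v = c)
    exact (Set.ncard_le_ncard hsub).trans (by simp)
  · have hsub : {v | v ∈ P ∧ (H.dist c v : ℤ) = z} ⊆ Set.range fun i => (p i).getVert z.toNat := by
      rintro v ⟨rfl | hv, hdist⟩
      · exact absurd (by simpa using hdist.symm) hz
      obtain ⟨i, hv⟩ := Set.mem_iUnion.1 hv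
      refine ⟨i, ?_⟩
      rw [← hdist, Int.toNat_natCast]
      exact (p i).getVert_dist_of_mem_support (hp i) hv
    calc _ ≤ (Set.range fun i => (p i).getVert z.toNat).ncard :=
          Set.ncard_le_ncard hsub (Set.finite_range _)
      _ ≤ Nat.card ι := Finite.card_range_le _
      _ ≤ _ := le_max_right _ _

lemma hasCliqueMinor_of_pairwise {ι : Type*} {k : ℕ} {B : ι → Set V} {J : Set ι}
    (hJ : J.Finite) (hk : k ≤ J.ncard) (hne : ∀ j ∈ J, (B j).Nonempty)
    (hconn : ∀ j ∈ J, IsPreconnectedOn G (B j)) (hdisj : J.PairwiseDisjoint B)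
    (hadj : J.Pairwise (AdjSets G on B)) : HasCliqueMinor G k := by
  have := hJ.to_subtype
  let e : Fin k ↪ J := (Fin.castLEEmb hk).trans (Finite.equivFin J).symm.toEmbedding
  refine ⟨fun i => B (e i), fun i => hne _ (e i).2, fun i j hij => ?_, fun i => hconn _ (e i).2,
    fun i j hij => ?_⟩
  · exact hdisj (e i).2 (e j).2 (Subtype.val_injective.ne (e.injective.ne hij))
  · exact hadj (e i).2 (e j).2 (Subtype.val_injective.ne (e.injective.ne hij))

section Parts

variable {d n : ℕ} {L L' : ℕ → Set V} {P : Set V}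

def partsBelow (L : ℕ → Set V) (n : ℕ) : Set V := ⋃ j < n, L j

lemma mem_partsBelow {v : V} : v ∈ partsBelow L n ↔ ∃ j < n, v ∈ L j := by
  simp [partsBelow]

lemma subset_partsBelow {j : ℕ} (h : j < n) : L j ⊆ partsBelow L n :=
  fun _ hv => mem_partsBelow.2 ⟨j, h, hv⟩

lemma partsBelow_mono {m : ℕ} (h : m ≤ n) : partsBelow L m ⊆ partsBelow L n :=
  fun _ hv => let ⟨j, hj, hv⟩ := mem_partsBelow.1 hv; mem_partsBelow.2 ⟨j, hj.trans_le h, hv⟩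

lemma partsBelow_congr (h : ∀ j < n, L' j = L j) : partsBelow L' n = partsBelow L n := by
  ext v
  simp only [mem_partsBelow]
  exact exists_congr fun j => and_congr_right fun hj => by rw [h j hj]

lemma partsBelow_update_self : partsBelow (update L n P) n = partsBelow L n :=
  partsBelow_congr fun _ hj => update_of_ne hj.ne _ _

lemma partsBelow_update_succ : partsBelow (update L n P) (n + 1) = partsBelow L n ∪ P := by
  ext v
  simp only [mem_partsBelow, Nat.lt_succ_iff_lt_or_eq, or_and_right, exists_or, exists_eq_left,
    update_self, Set.mem_union]
  refine or_congr (exists_congr fun j => and_congr_right fun hj => ?_) Iff.rfl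
  rw [update_of_ne hj.ne]

lemma pairwiseDisjoint_of_disjoint_partsBelow (h : ∀ i < n, Disjoint (L i) (partsBelow L i)) :
    (Set.Iio n).PairwiseDisjoint L := by
  intro i hi j hj hij
  rcases hij.lt_or_gt with hij | hij
  · exact (h j hj).symm.mono_left (subset_partsBelow hij)
  · exact (h i hi).mono_right (subset_partsBelow hij)

def attachments (G : SimpleGraph V) (L : ℕ → Set V) (n : ℕ) (A : Set V) : Set ℕ :=
  {j | j < n ∧ AdjSets G (L j) A}

lemma attachments_finite : (attachments G L n A).Finite :=
  (Set.finite_Iio n).subset fun _ hj => hj.1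

lemma attachments_mono (h : A ⊆ A') : attachments G L n A ⊆ attachments G L n A' :=
  fun _ ⟨hj, hadj⟩ => ⟨hj, hadj.mono le_rfl h⟩

lemma attachments_congr (h : ∀ j < n, L' j = L j) :
    attachments G L' n A = attachments G L n A := by
  ext j
  exact and_congr_right fun hj => by rw [h j hj]

lemma attachments_update_self : attachments G (update L n P) n A = attachments G L n A :=
  attachments_congr fun _ hj => update_of_ne hj.ne _ _

lemma pairwise_adjSets_congr {J : Set ℕ} (hJ : J.Pairwise (AdjSets G on L))
    (h : ∀ j ∈ J, L' j = L j) : J.Pairwise (AdjSets G on L') := fun i hi j hj hij => by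
  simpa only [onFun, h i hi, h j hj] using hJ hi hj hij

structure IsGoodPart (G : SimpleGraph V) (d : ℕ) (L : ℕ → Set V) (i : ℕ) : Prop where
  nonempty : (L i).Nonempty
  disjoint : Disjoint (L i) (partsBelow L i)
  preconnected : IsPreconnectedOn G (L i)
  layering : ∃ lam : V → ℤ, IsLayering (restrictSet G (partsBelow L i)ᶜ) lam ∧
    ∀ z, {v | v ∈ L i ∧ lam v = z}.ncard ≤ d
  attachments_pairwise : (attachments G L i (L i)).Pairwise (AdjSets G on L)

lemma IsGoodPart.congr {i : ℕ} (hi : IsGoodPart G d L i) (h : ∀ j ≤ i, L' j = L j) :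
    IsGoodPart G d L' i := by
  have hlt : ∀ j < i, L' j = L j := fun j hj => h j hj.le
  have hL := h i le_rfl
  have hB := partsBelow_congr hlt
  refine ⟨hL ▸ hi.nonempty, hL ▸ hB ▸ hi.disjoint, hL ▸ hi.preconnected, hL ▸ hB ▸ hi.layering, ?_⟩
  rw [hL, attachments_congr hlt]
  exact pairwise_adjSets_congr hi.attachments_pairwise fun j hj => hlt j hj.1

lemma attachments_ncard_le (hparts : ∀ i < n, IsGoodPart G d L i) (hA : A.Nonempty)
    (hAconn : IsPreconnectedOn G A) (hAdisj : Disjoint A (partsBelow L n))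
    (hclique : (attachments G L n A).Pairwise (AdjSets G on L))
    (hG : ¬ HasCliqueMinor G (d + 2)) : (attachments G L n A).ncard ≤ d := by
  by_contra! hcard
  have hLA : ∀ j ∈ attachments G L n A, update L n A j = L j :=
    fun j hj => update_of_ne hj.1.ne _ _
  have hnotin : n ∉ attachments G L n A := fun h => h.1.false
  apply hG
  refine hasCliqueMinor_of_pairwise (B := update L n A) (J := insert n (attachments G L n A))
    (attachments_finite.insert n) ?_ ?_ ?_ ?_ ?_
  · rw [Set.ncard_insert_of_notMem hnotin attachments_finite]
    omega
  · rintro j (rfl | hj)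
    · simpa using hA
    · simpa [hLA j hj] using (hparts j hj.1).nonempty
  · rintro j (rfl | hj)
    · simpa using hAconn
    · simpa [hLA j hj] using (hparts j hj.1).preconnected
  · refine Set.PairwiseDisjoint.insert (fun i hi j hj hij => ?_) fun j hj _ => ?_
    · simpa only [onFun, hLA i hi, hLA j hj] using
        pairwiseDisjoint_of_disjoint_partsBelow (fun i hi => (hparts i hi).disjoint)
          hi.1 hj.1 hij
    · simpa [hLA j hj] using hAdisj.mono_right (subset_partsBelow hj.1)
  · refine Set.Pairwise.insert (pairwise_adjSets_congr hclique hLA) fun j hj _ => ?_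
    have : AdjSets G (L j) A := hj.2
    simpa [onFun, hLA j hj] using And.intro this.symm this

end Parts

section Construction

variable {d n : ℕ} {L : ℕ → Set V} {P : Set V}

def BoundaryCliques (G : SimpleGraph V) (L : ℕ → Set V) (n : ℕ) : Prop :=
  ∀ c ∉ partsBelow L n,
    (attachments G L n (componentIn G (partsBelow L n)ᶜ c)).Pairwise (AdjSets G on L)

lemma boundaryCliques_update (hbdry : BoundaryCliques G L n) (hc : c ∉ partsBelow L n)
    (hPC : P ⊆ componentIn G (partsBelow L n)ᶜ c)
    (hPadj : ∀ j ∈ attachments G L n (componentIn G (partsBelow L n)ᶜ c), AdjSets G (L j) P) :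
    BoundaryCliques G (update L n P) (n + 1) := by
  intro c' hc'
  rw [partsBelow_update_succ] at hc' ⊢
  set R := (partsBelow L n)ᶜ
  have hc'R : c' ∈ R := fun h => hc' (Or.inl h)
  have hsub : componentIn G (partsBelow L n ∪ P)ᶜ c' ⊆ componentIn G R c' :=
    componentIn_mono (Set.compl_subset_compl.2 Set.subset_union_left)
  have hupdate : ∀ S : Set V, ∀ j ∈ attachments G L n S, update L n P j = L j :=
    fun _ j hj => update_of_ne hj.1.ne _ _
  by_cases hc'C : c' ∈ componentIn G R c
  · refine (Set.Pairwise.insert (a := n) (pairwise_adjSets_congr (hbdry c hc) (hupdate _))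
      fun j hj _ => ?_).mono fun j hj' => ?_
    · simpa [onFun, update_of_ne hj.1.ne] using And.intro (hPadj j hj).symm (hPadj j hj)
    · obtain ⟨hj, hadj⟩ := hj'
      rcases Nat.lt_succ_iff_lt_or_eq.1 hj with hjn | rfl
      · rw [update_of_ne hjn.ne] at hadj
        exact Or.inr ⟨hjn, hadj.mono le_rfl (hsub.trans (componentIn_subset_of_mem hc'C))⟩
      · exact Or.inl rfl
  · refine (pairwise_adjSets_congr (hbdry c' hc'R) (hupdate _)).mono fun j ⟨hj, hadj⟩ => ?_
    rcases Nat.lt_succ_iff_lt_or_eq.1 hj with hjn | rfl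
    · rw [update_of_ne hjn.ne] at hadj
      exact ⟨hjn, hadj.mono le_rfl hsub⟩
    · rw [update_self] at hadj
      obtain ⟨u, hu, w, hw, huw⟩ := hadj
      have hwC := mem_componentIn_of_adj hc (hPC hu) (componentIn_subset hc'R (hsub hw)) huw
      exact (hc'C (Reachable.trans hwC (hsub hw).symm)).elim

lemma exists_next_part (hparts : ∀ i < n, IsGoodPart G d L i) (hbdry : BoundaryCliques G L n)
    (hd : 1 ≤ d) (hG : ¬ HasCliqueMinor G (d + 2)) (hc : c ∉ partsBelow L n) :
    ∃ P, c ∈ P ∧ IsGoodPart G d (update L n P) n ∧ BoundaryCliques G (update L n P) (n + 1) := by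
  set R := (partsBelow L n)ᶜ
  set C := componentIn G R c
  set Q := attachments G L n C
  have hCR : C ⊆ R := componentIn_subset hc
  have hQ : Q.ncard ≤ d := attachments_ncard_le hparts ⟨c, mem_componentIn_self⟩
    isPreconnectedOn_componentIn (Set.subset_compl_iff_disjoint_right.1 hCR) (hbdry c hc) hG
  have hattach : ∀ j : Q, ∃ y ∈ C, AdjSets G (L j) {y} := fun j =>
    let ⟨u, hu, y, hy, huy⟩ := j.2.2; ⟨y, hy, u, hu, y, rfl, huy⟩
  choose x hxC hxadj using hattach
  have : Finite Q := attachments_finite.to_subtype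
  obtain ⟨P, hcP, hxP, hPconn, hwidth⟩ := exists_geodesic_tree x hxC
  have hPC : P ⊆ C := fun v hv => (hPconn c hcP v hv).mono restrictSet_le
  have hPadj : ∀ j ∈ Q, AdjSets G (L j) P := fun j hj =>
    (hxadj ⟨j, hj⟩).mono le_rfl (Set.singleton_subset_iff.2 (hxP _))
  refine ⟨P, hcP, ?_, boundaryCliques_update hbdry hc hPC hPadj⟩
  refine ⟨?_, ?_, ?_, ⟨fun v => ((restrictSet G R).dist c v : ℤ), ?_, fun z => ?_⟩, ?_⟩ <;>
    simp only [update_self, partsBelow_update_self, attachments_update_self]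
  · exact ⟨c, hcP⟩
  · exact Set.subset_compl_iff_disjoint_right.1 (hPC.trans hCR)
  · exact fun u hu v hv => (hPconn u hu v hv).mono restrictSet_restrictSet_le
  · exact isLayering_dist _ _
  · exact (hwidth z).trans (max_le hd hQ)
  · exact pairwise_adjSets_congr ((hbdry c hc).mono (attachments_mono hPC))
      fun j hj => update_of_ne hj.1.ne _ _

lemma exists_good_parts [Finite V] (hd : 1 ≤ d) (hG : ¬ HasCliqueMinor G (d + 2)) :
    ∃ (n : ℕ) (L : ℕ → Set V), (∀ i < n, IsGoodPart G d L i) ∧ partsBelow L n = Set.univ := by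
  suffices h : ∀ N n (L : ℕ → Set V), (partsBelow L n)ᶜ.ncard = N →
      (∀ i < n, IsGoodPart G d L i) → BoundaryCliques G L n →
      ∃ (n : ℕ) (L : ℕ → Set V), (∀ i < n, IsGoodPart G d L i) ∧ partsBelow L n = Set.univ from
    h _ 0 (fun _ => ∅) rfl (fun _ h => absurd h (Nat.not_lt_zero _))
      fun _ _ j hj => absurd hj.1 (Nat.not_lt_zero _)
  intro N
  induction N using Nat.strong_induction_on with
  | _ N ih =>
  intro n L hN hparts hbdry
  by_cases hcover : partsBelow L n = Set.univ
  · exact ⟨n, L, hparts, hcover⟩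
  obtain ⟨c, hc⟩ := (Set.ne_univ_iff_exists_notMem _).1 hcover
  obtain ⟨P, hcP, hnew, hbdry'⟩ := exists_next_part hparts hbdry hd hG hc
  refine ih _ ?_ (n + 1) _ rfl (fun i hi => ?_) hbdry'
  · rw [← hN, partsBelow_update_succ]
    refine Set.ncard_lt_ncard (Set.compl_subset_compl.2 Set.subset_union_left |>.ssubset_of_ne ?_)
    exact fun h => (h ▸ hc : c ∈ (partsBelow L n ∪ P)ᶜ) (Or.inr hcP)
  · rcases Nat.lt_succ_iff_lt_or_eq.1 hi with hin | rfl
    · exact (hparts i hin).congr fun j hj => update_of_ne (hj.trans_lt hin).ne _ _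
    · exact hnew

end Construction

lemma exists_linearOrder_lt_of_lt {α : Type*} [LinearOrder α] (f : V → α) :
    ∃ _ : LinearOrder V, ∀ u v, f u < f v → u < v := by
  let : LinearOrder V := IsWellOrder.linearOrder WellOrderingRel
  exact ⟨LinearOrder.lift' (fun v => toLex (f v, v)) fun u v h => congrArg Prod.snd (toLex.injective h),
    fun u v h => Prod.Lex.lt_iff.2 (Or.inl h)⟩

lemma exists_linearOrder_of_parts {n : ℕ} {L : ℕ → Set V} (hdisj : (Set.Iio n).PairwiseDisjoint L)
    (hcover : partsBelow L n = Set.univ) :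
    ∃ _ : LinearOrder V, ∀ i j : Fin n, i < j → ∀ u ∈ L i, ∀ v ∈ L j, u < v := by
  choose idx hidx using fun v => mem_partsBelow.1 (hcover ▸ Set.mem_univ v)
  have hidx_eq : ∀ (i : Fin n), ∀ v ∈ L i, idx v = i := fun i v hv => by
    by_contra hne
    exact Set.disjoint_left.1 (hdisj (hidx v).1 i.2 hne) (hidx v).2 hv
  obtain ⟨ord, hord⟩ := exists_linearOrder_lt_of_lt idx
  exact ⟨ord, fun i j hij u hu v hv => hord u v (by rwa [hidx_eq i u hu, hidx_eq j v hv])⟩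

section OrderedGraph

variable {O : OrderedGraph} {d n : ℕ} {L : ℕ → Set O.V}

lemma quot_mem_Tclass (hparts : ∀ i < n, IsGoodPart O.graph d L i)
    (hG : ¬ HasCliqueMinor O.graph (d + 2)) : O.quot n (fun i => L i) ∈ Tclass d := by
  refine ⟨fun (v u w : Fin n) hvu hvw huv hwv huw => ?_, fun (v : Fin n) => ?_⟩
  · have hu : (u : ℕ) ∈ attachments O.graph L v (L v) := ⟨huv, AdjSets.symm hvu.2⟩
    have hw : (w : ℕ) ∈ attachments O.graph L v (L v) := ⟨hwv, AdjSets.symm hvw.2⟩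
    exact ⟨huw, (hparts v v.2).attachments_pairwise hu hw (Fin.val_injective.ne huw)⟩
  · have hgood := hparts v v.2
    calc _ ≤ (attachments O.graph L v (L v)).ncard :=
          Set.ncard_le_ncard_of_injOn Fin.val (fun u (⟨hvu, huv⟩ : _ ∧ u < v) => ⟨huv, AdjSets.symm hvu.2⟩)
            Fin.val_injective.injOn attachments_finite
      _ ≤ d := attachments_ncard_le (fun i hi => hparts i (hi.trans v.2)) hgood.nonempty
          hgood.preconnected hgood.disjoint hgood.attachments_pairwise hG

lemma mem_Cpow_of_isGoodPart (hparts : ∀ i < n, IsGoodPart O.graph d L i)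
    (hcover : partsBelow L n = Set.univ)
    (horder : ∀ i j : Fin n, i < j → ∀ u ∈ L i, ∀ v ∈ L j, u < v)
    (hG : ¬ HasCliqueMinor O.graph (d + 2)) : O ∈ Cpow (Tclass d) d := by
  have hdisj := pairwiseDisjoint_of_disjoint_partsBelow fun i hi => (hparts i hi).disjoint
  refine ⟨n, fun i => L i, fun i => (hparts i i.2).nonempty,
    fun i j hij => hdisj i.2 j.2 (Fin.val_injective.ne hij), ?_, horder, fun i => ?_,
    quot_mem_Tclass hparts hG⟩
  · refine Set.eq_univ_of_forall fun v => ?_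
    obtain ⟨j, hj, hv⟩ := mem_partsBelow.1 (hcover ▸ Set.mem_univ v)
    exact Set.mem_iUnion.2 ⟨⟨j, hj⟩, hv⟩
  obtain ⟨lam, hlam, hwidth⟩ := (hparts i i.2).layering
  have hlater : (⋃ j ∈ Set.Ici i, L j) ⊆ (partsBelow L i)ᶜ := by
    simp only [Set.iUnion_subset_iff, Set.mem_Ici]
    exact fun j hij => Set.subset_compl_iff_disjoint_right.2
      ((hparts j j.2).disjoint.mono_right (partsBelow_mono hij))
  have hi : L i ⊆ ⋃ j ∈ Set.Ici i, L j := Set.subset_biUnion_of_mem (u := fun j : Fin n => L j)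
    Set.self_mem_Ici
  exact ⟨lam, fun x hx y hy hxy => hlam ⟨hxy, hlater (hi hx), hlater (hi hy)⟩,
    fun x _ y _ hr => (hlam.mono (restrictSet_mono hlater)).abs_sub_le_dist hr, hwidth⟩

end OrderedGraph

end GeodesicPartition

open GeodesicPartition in
/-- For every `k ≥ 3`, every finite `K_k`-minor-free simple graph admits a linear order
on its vertices such that the resulting ordered graph belongs to `T_{k−2}^{(k−2)}`. -/
theorem stmt_8 (k : ℕ) (hk : 3 ≤ k) (V : Type) [Fintype V] (G : SimpleGraph V)
    (hG : ¬ HasCliqueMinor G k) :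
    ∃ _ord : LinearOrder V,
      ({ V := V, graph := G } : OrderedGraph) ∈ Cpow (Tclass (k - 2)) (k - 2) := by
  obtain ⟨d, rfl⟩ : ∃ d, k = d + 2 := ⟨k - 2, by omega⟩
  obtain ⟨n, L, hparts, hcover⟩ := exists_good_parts (by omega : 1 ≤ d) hG
  obtain ⟨ord, horder⟩ := exists_linearOrder_of_parts
    (pairwiseDisjoint_of_disjoint_partsBelow fun i hi => (hparts i hi).disjoint) hcover
  exact ⟨ord, mem_Cpow_of_isGoodPart (O := { V := V, graph := G }) hparts hcover horder hG⟩
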